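/- arXiv:2005.02290 — 5 statements merged into one kernel-verified Lean document; each statement's English description precedes it below -/
import Mathlib

section
/- Let n ≥ 3 and let K ⊂ ℝ^n be an affine body of revolution with axis of revolution the line L. Let ℓ be a 1-dimensional linear subspace of ℝ^n and let π : ℝ^n → ℓ⊥ be the orthogonal projection along ℓ. Then π(K) is an affine body of revolution in ℓ⊥. Moreover, if L is parallel to ℓ then π(K) is an ellipsoid, and if L is not parallel to ℓ then π(L) is an axis of revolution of π(K). -/
open scoped RealInnerProductSpace

noncomputable section

variable {W : Type*} [NormedAddCommGroup W] [InnerProductSpace ℝ W]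

/-- The line through `p` with direction `v`. -/
def lineThrough (p v : W) : Set W := {y | ∃ t : ℝ, y = p + t • v}

/-- A convex body: a compact convex set with nonempty interior. -/
def IsConvexBody (K : Set W) : Prop := IsCompact K ∧ Convex ℝ K ∧ (interior K).Nonempty

/-- `S` is a Euclidean ball inside the slice `Δ`, centered at `q`
(possibly empty or a single point). -/
def IsBallSection (Δ : Set W) (q : W) (S : Set W) : Prop :=
  S = ∅ ∨ ∃ r : ℝ, 0 ≤ r ∧ S = {y ∈ Δ | dist y q ≤ r}

/-- `K` is a body of revolution with axis of revolution the line through `p`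
with direction `v`: every section of `K` by an affine hyperplane orthogonal to the
axis is a Euclidean ball centered at the point where the axis meets that hyperplane. -/
def IsBodyOfRevolutionAxis (K : Set W) (p v : W) : Prop :=
  v ≠ 0 ∧ ∀ c : ℝ,
    IsBallSection {y | ⟪y, v⟫ = c}
      (p + ((c - ⟪p, v⟫) / ⟪v, v⟫) • v)
      (K ∩ {y | ⟪y, v⟫ = c})

/-- `K` is a body of revolution: it admits an axis of revolution. -/
def IsBodyOfRevolution (K : Set W) : Prop := ∃ p v, IsBodyOfRevolutionAxis K p v

/-- An ellipsoid: a set affinely equivalent to the closed unit Euclidean ball. -/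
def IsEllipsoid (A : Set W) : Prop := ∃ e : W ≃ᵃ[ℝ] W, A = e '' Metric.closedBall 0 1

/-- Two sets in (possibly different) real vector spaces are affinely equivalent. -/
def AffEquivSets {V₁ V₂ : Type*} [AddCommGroup V₁] [Module ℝ V₁] [AddCommGroup V₂]
    [Module ℝ V₂] (A : Set V₁) (B : Set V₂) : Prop := ∃ e : V₁ ≃ᵃ[ℝ] V₂, e '' A = B

/-- Two sets in (possibly different) real vector spaces are linearly equivalent. -/
def LinEquivSets {V₁ V₂ : Type*} [AddCommGroup V₁] [Module ℝ V₁] [AddCommGroup V₂]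
    [Module ℝ V₂] (A : Set V₁) (B : Set V₂) : Prop := ∃ e : V₁ ≃ₗ[ℝ] V₂, e '' A = B

/-- Two sets in (possibly different) metric spaces are congruent: one is mapped
onto the other by an isometry between the ambient spaces. -/
def CongruentSets {V₁ V₂ : Type*} [PseudoEMetricSpace V₁] [PseudoEMetricSpace V₂]
    (A : Set V₁) (B : Set V₂) : Prop := ∃ e : V₁ ≃ᵢ V₂, e '' A = B

/-- `K` is an affine body of revolution with axis of revolution the line through `p`
with direction `v`: some affine equivalence `g` of the ambient space maps `K` to a
body of revolution and the given line to its axis of revolution. -/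
def IsAffineBodyOfRevolutionAxis (K : Set W) (p v : W) : Prop :=
  ∃ g : W ≃ᵃ[ℝ] W, IsBodyOfRevolutionAxis (g '' K) (g p) (g.linear v)

/-- `K` is an affine body of revolution. -/
def IsAffineBodyOfRevolution (K : Set W) : Prop := ∃ p v, IsAffineBodyOfRevolutionAxis K p v

/-- `K` is an affine body of revolution with axis of revolution `L` and associated
hyperplane of revolution `H`: some affine equivalence `g` maps `K` to a body of
revolution whose axis `g '' L` is a line through the origin with direction `v`, and
maps `H` to the orthogonal complement of that axis. -/
def IsAffineBORAxisHyp (K L H : Set W) : Prop :=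
  ∃ (g : W ≃ᵃ[ℝ] W) (v : W),
    IsBodyOfRevolutionAxis (g '' K) 0 v ∧ g '' L = lineThrough 0 v ∧
    g '' H = {y | ⟪y, v⟫ = 0}

end

/-!
A compact convex set is a body of revolution about the axis `p + ℝ v` exactly when it is axially
symmetric: with every point `x` it contains each `y` with `⟪y, v⟫ = ⟪x, v⟫` and
`dist y p = dist x p`. Indeed each slice is then convex and a union of spheres about the point
where the axis meets it, hence a ball. Unlike the slice condition, axial symmetry passes directly
to orthogonal projections `π` onto a subspace `E`: a point `y ∈ E` with the right invariants is
the projection of `x + (y - π x)`, which has the same invariants as `x`.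

For the affine statement, follow the normalising affine map `g` by a reflection so that it maps
`u` to a multiple of `u`. Then `π ∘ g = G ∘ π` for an affine automorphism `G` of `u⊥`, and
`G (π K) = π (g K)` is axially symmetric about the line `π (g p) + ℝ π (g v)`. When `v ∥ u` its
direction is `0`, axial symmetry says that `π (g K)` is a ball, and `π K` is an ellipsoid.
-/

open Set Metric Submodule

section InnerProductSpace

variable {W : Type*} [NormedAddCommGroup W] [InnerProductSpace ℝ W]

-- the point where the axis `p + ℝ v` meets the hyperplane `⟪y, v⟫ = c`
noncomputable def axisPoint (p v : W) (c : ℝ) : W := p + ((c - ⟪p, v⟫) / ⟪v, v⟫) • v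

theorem inner_axisPoint {v : W} (hv : v ≠ 0) (p : W) (c : ℝ) : ⟪axisPoint p v c, v⟫ = c := by
  have : ⟪v, v⟫ ≠ 0 := inner_self_ne_zero.mpr hv
  rw [axisPoint, inner_add_left, real_inner_smul_left]
  field_simp
  ring

theorem dist_sq_eq_dist_axisPoint_sq_add {v : W} (hv : v ≠ 0) (p : W) {y : W} {c : ℝ}
    (hy : ⟪y, v⟫ = c) :
    dist y p ^ 2 = dist y (axisPoint p v c) ^ 2 + dist (axisPoint p v c) p ^ 2 := by
  have horth : ⟪y - axisPoint p v c, axisPoint p v c - p⟫ = 0 := by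
    rw [axisPoint, add_sub_cancel_left, inner_smul_right, inner_sub_left, hy,
      ← axisPoint, inner_axisPoint hv, sub_self, mul_zero]
  simp only [dist_eq_norm, sq]
  rw [← norm_add_sq_eq_norm_sq_add_norm_sq_real horth, sub_add_sub_cancel]

theorem dist_axisPoint_eq_iff {v : W} (hv : v ≠ 0) (p : W) {x y : W} {c : ℝ}
    (hx : ⟪x, v⟫ = c) (hy : ⟪y, v⟫ = c) :
    dist y (axisPoint p v c) = dist x (axisPoint p v c) ↔ dist y p = dist x p := by
  rw [← sq_eq_sq₀ dist_nonneg dist_nonneg, ← sq_eq_sq₀ dist_nonneg dist_nonneg,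
    dist_sq_eq_dist_axisPoint_sq_add hv p hx, dist_sq_eq_dist_axisPoint_sq_add hv p hy,
    add_left_inj]

theorem IsBallSection.of_forall_dist_eq {S Δ : Set W} {q : W} (hS : IsCompact S)
    (hSc : Convex ℝ S) (hSΔ : S ⊆ Δ) (hΔ : ∀ y ∈ Δ, ∀ t : ℝ, q + t • (y - q) ∈ Δ)
    (hsph : ∀ x ∈ S, ∀ y ∈ Δ, dist y q = dist x q → y ∈ S) : IsBallSection Δ q S := by
  rcases S.eq_empty_or_nonempty with hempty | hne
  · exact Or.inl hempty
  obtain ⟨x₀, hx₀, hmax⟩ :=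
    hS.exists_isMaxOn hne (continuous_id.dist continuous_const).continuousOn
  set r := dist x₀ q
  refine Or.inr ⟨r, dist_nonneg, subset_antisymm (fun y hy => ⟨hSΔ hy, hmax hy⟩) ?_⟩
  rintro y ⟨hyΔ, hyr⟩
  -- `y` lies on a diameter of the sphere of radius `r` about `q` in `Δ`; both ends are in `S`
  obtain ⟨z, t, hzΔ, hz, ht, rfl⟩ :
      ∃ z t, z ∈ Δ ∧ dist z q = r ∧ t ∈ Icc (0 : ℝ) 1 ∧ y = q + t • (z - q) := by
    rcases eq_or_ne y q with rfl | hyq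
    · exact ⟨x₀, 0, hSΔ hx₀, rfl, ⟨le_rfl, zero_le_one⟩, by simp⟩
    have hd : 0 < dist y q := dist_pos.mpr hyq
    refine ⟨q + (r / dist y q) • (y - q), dist y q / r, hΔ y hyΔ _, ?_, ?_, ?_⟩
    · rw [dist_eq_norm, add_sub_cancel_left, norm_smul, ← dist_eq_norm, Real.norm_eq_abs,
        abs_of_nonneg (div_nonneg dist_nonneg hd.le), div_mul_cancel₀ _ hd.ne']
    · exact ⟨by positivity, div_le_one_of_le₀ hyr dist_nonneg⟩
    · rw [add_sub_cancel_left, smul_smul, div_mul_div_cancel₀ (hd.trans_le hyr).ne',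
        div_self hd.ne', one_smul, add_sub_cancel]
  have hantipode : q + (-1 : ℝ) • (z - q) ∈ S := by
    refine hsph x₀ hx₀ _ (hΔ z hzΔ (-1)) (Eq.trans ?_ hz)
    rw [dist_eq_norm, dist_eq_norm, add_sub_cancel_left, norm_smul, norm_neg, norm_one,
      one_mul]
  have := hSc.add_smul_sub_mem hantipode (hsph x₀ hx₀ z hzΔ hz) (t := (1 + t) / 2)
    ⟨by linarith [ht.1], by linarith [ht.2]⟩
  convert this using 1
  module

def IsAxiallySymmetric (K : Set W) (p v : W) : Prop :=
  ∀ x ∈ K, ∀ y, ⟪y, v⟫ = ⟪x, v⟫ → dist y p = dist x p → y ∈ K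

theorem IsBodyOfRevolutionAxis.isAxiallySymmetric {K : Set W} {p v : W}
    (h : IsBodyOfRevolutionAxis K p v) : IsAxiallySymmetric K p v := by
  intro x hx y hyv hyp
  rcases h.2 ⟪x, v⟫ with hempty | ⟨r, -, hball⟩
  · exact absurd (hempty ▸ ⟨hx, rfl⟩ : x ∈ (∅ : Set W)) (notMem_empty x)
  have hxr : dist x (axisPoint p v ⟪x, v⟫) ≤ r := by
    have : x ∈ K ∩ {y | ⟪y, v⟫ = ⟪x, v⟫} := ⟨hx, rfl⟩
    rw [hball] at this
    exact this.2
  have hy : y ∈ K ∩ {y | ⟪y, v⟫ = ⟪x, v⟫} := by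
    rw [hball]
    refine ⟨hyv, ?_⟩
    rwa [← axisPoint, (dist_axisPoint_eq_iff h.1 p rfl hyv).mpr hyp]
  exact hy.1

theorem IsAxiallySymmetric.isBodyOfRevolutionAxis {K : Set W} {p v : W} (hv : v ≠ 0)
    (hK : IsCompact K) (hKc : Convex ℝ K) (h : IsAxiallySymmetric K p v) :
    IsBodyOfRevolutionAxis K p v := by
  refine ⟨hv, fun c => IsBallSection.of_forall_dist_eq ?_ ?_ inter_subset_right ?_ ?_⟩
  · exact hK.inter_right (isClosed_eq (continuous_id.inner continuous_const) continuous_const)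
  · exact hKc.inter (convex_hyperplane ((innerₛₗ ℝ).flip v).isLinear c)
  · intro y hy t
    change ⟪_, v⟫ = c
    rw [← axisPoint, inner_add_left, real_inner_smul_left, inner_sub_left, hy,
      inner_axisPoint hv, sub_self, mul_zero, add_zero]
  · exact fun x hx y hy hd =>
      ⟨h x hx.1 y (hy.trans hx.2.symm) ((dist_axisPoint_eq_iff hv p hx.2 hy).mp hd), hy⟩

theorem IsAxiallySymmetric.image_linearIsometryEquiv {W' : Type*} [NormedAddCommGroup W']
    [InnerProductSpace ℝ W'] {K : Set W} {p v : W} (h : IsAxiallySymmetric K p v)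
    (R : W ≃ₗᵢ[ℝ] W') : IsAxiallySymmetric (R '' K) (R p) (R v) := by
  rintro _ ⟨x, hx, rfl⟩ y hyv hyp
  refine ⟨R.symm y, h x hx _ ?_ ?_, R.apply_symm_apply y⟩
  · rw [← R.inner_map_map, R.apply_symm_apply, hyv, R.inner_map_map]
  · rw [← R.dist_map, R.apply_symm_apply, hyp, R.dist_map]

theorem IsAxiallySymmetric.image_orthogonalProjectionOnto {K : Set W} {p v : W}
    (h : IsAxiallySymmetric K p v) (E : Submodule ℝ W) [E.HasOrthogonalProjection] :
    IsAxiallySymmetric (E.orthogonalProjectionOnto '' K) (E.orthogonalProjectionOnto p)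
      (E.orthogonalProjectionOnto v) := by
  rintro _ ⟨x, hx, rfl⟩ y hyv hyp
  set Q := E.starProjection
  set d : W := y - Q x with hd_def
  have hd : d ∈ E := E.sub_mem y.2 (E.starProjection_apply_mem x)
  have hQd : ∀ w, ⟪w, d⟫ = ⟪Q w, d⟫ := fun w => by
    rw [inner_starProjection_left_eq_right, starProjection_eq_self_iff.mpr hd]
  refine ⟨x + d, h x hx _ ?_ ?_, Subtype.ext ?_⟩
  · have hyv' : ⟪(y : W), Q v⟫ = ⟪Q x, Q v⟫ := by
      rw [coe_inner, coe_inner] at hyv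
      exact hyv
    rw [inner_add_left, real_inner_comm v d, hQd, hd_def, inner_sub_right,
      ← real_inner_comm (Q v), ← real_inner_comm (Q v), hyv', sub_self, add_zero]
  · have hyp' : ‖Q (x - p) + d‖ = ‖Q (x - p)‖ := by
      rw [map_sub, ← add_sub_right_comm, add_sub_cancel, ← dist_eq_norm, ← dist_eq_norm]
      exact hyp
    rw [dist_eq_norm, dist_eq_norm, add_sub_right_comm,
      ← sq_eq_sq₀ (norm_nonneg _) (norm_nonneg _), norm_add_sq_real, hQd]
    rw [← sq_eq_sq₀ (norm_nonneg _) (norm_nonneg _), norm_add_sq_real] at hyp'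
    linarith
  · change Q (x + d) = y
    rw [map_add, starProjection_eq_self_iff.mpr hd, hd_def, add_sub_cancel]

theorem orthogonalProjectionOnto_apply_orthogonalProjectionOnto_of_mapsTo (E : Submodule ℝ W)
    [E.HasOrthogonalProjection] {A : W →ₗ[ℝ] W} (hA : MapsTo A Eᗮ Eᗮ) (x : W) :
    E.orthogonalProjectionOnto (A (E.orthogonalProjectionOnto x)) =
      E.orthogonalProjectionOnto (A x) := by
  have h := orthogonalProjectionOnto_apply_of_mem_orthogonal
    (hA (E.sub_starProjection_mem_orthogonal x))
  rwa [map_sub, map_sub, sub_eq_zero, eq_comm] at h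

theorem exists_affineEquiv_orthogonalProjectionOnto_comp (F : Submodule ℝ W)
    [F.HasOrthogonalProjection] (g : W ≃ᵃ[ℝ] W) (hg : F.map (g.linear : W →ₗ[ℝ] W) = F) :
    ∃ G : Fᗮ ≃ᵃ[ℝ] Fᗮ, ∀ x,
      G (Fᗮ.orthogonalProjectionOnto x) = Fᗮ.orthogonalProjectionOnto (g x) ∧
      G.linear (Fᗮ.orthogonalProjectionOnto x) = Fᗮ.orthogonalProjectionOnto (g.linear x) := by
  set P := Fᗮ.orthogonalProjectionOnto
  have hF : MapsTo g.linear Fᗮᗮ Fᗮᗮ := by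
    rw [orthogonal_orthogonal]
    exact fun x hx => hg ▸ mem_map_of_mem hx
  have hF' : MapsTo g.linear.symm Fᗮᗮ Fᗮᗮ := by
    rw [orthogonal_orthogonal]
    intro x hx
    obtain ⟨y, hy, rfl⟩ := mem_map.mp (hg.symm ▸ hx)
    simpa using hy
  let M : Fᗮ ≃ₗ[ℝ] Fᗮ := LinearEquiv.ofLinearMap
    (P.toLinearMap ∘ₗ g.linear.toLinearMap ∘ₗ Fᗮ.subtype)
    (P.toLinearMap ∘ₗ g.linear.symm.toLinearMap ∘ₗ Fᗮ.subtype)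
    (LinearMap.ext fun y =>
      (orthogonalProjectionOnto_apply_orthogonalProjectionOnto_of_mapsTo _ hF _).trans (by simp))
    (LinearMap.ext fun y =>
      (orthogonalProjectionOnto_apply_orthogonalProjectionOnto_of_mapsTo _ hF' _).trans (by simp))
  have hM : ∀ x, M (P x) = P (g.linear x) :=
    orthogonalProjectionOnto_apply_orthogonalProjectionOnto_of_mapsTo _ hF
  refine ⟨M.toAffineEquiv.trans (AffineEquiv.constVAdd ℝ Fᗮ (P (g 0))), fun x => ⟨?_, hM x⟩⟩
  have hgx : g x = g.linear x + g 0 := by simpa using g.map_vadd 0 x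
  change P (g 0) +ᵥ M (P x) = P (g x)
  rw [hM, hgx, map_add, vadd_eq_add, add_comm]

theorem exists_linearIsometryEquiv_apply_eq_smul {a : W} (ha : a ≠ 0) {u : W} (hu : u ≠ 0) :
    ∃ R : W ≃ₗᵢ[ℝ] W, ∃ c : ℝ, c ≠ 0 ∧ R a = c • u := by
  have hc : ‖a‖ / ‖u‖ ≠ 0 := div_ne_zero (norm_ne_zero_iff.mpr ha) (norm_ne_zero_iff.mpr hu)
  refine ⟨reflection (ℝ ∙ (a - (‖a‖ / ‖u‖) • u))ᗮ, _, hc, reflection_sub ?_⟩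
  rw [norm_smul, Real.norm_eq_abs, abs_div, abs_norm, abs_norm,
    div_mul_cancel₀ _ (norm_ne_zero_iff.mpr hu)]

theorem map_span_singleton_eq_of_apply_eq_smul {A : W ≃ₗ[ℝ] W} {u : W} {c : ℝ} (hc : c ≠ 0)
    (h : A u = c • u) : (ℝ ∙ u).map (A : W →ₗ[ℝ] W) = ℝ ∙ u := by
  rw [map_span, image_singleton, LinearEquiv.coe_coe, h, span_singleton_smul_eq hc.isUnit]

theorem isEllipsoid_image_closedBall (e : W ≃ᵃ[ℝ] W) (c : W) {r : ℝ} (hr : 0 < r) :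
    IsEllipsoid (e '' closedBall c r) := by
  refine ⟨((LinearEquiv.smulOfNeZero ℝ W r hr.ne').toAffineEquiv.trans
    (AffineEquiv.constVAdd ℝ W c)).trans e, ?_⟩
  rw [AffineEquiv.coe_trans, image_comp, AffineEquiv.coe_trans, image_comp,
    ← affinity_unitClosedBall hr.le]
  rfl

theorem IsAxiallySymmetric.eq_closedBall [Nontrivial W] {S : Set W} {c : W}
    (hS : IsConvexBody S) (h : IsAxiallySymmetric S c 0) : ∃ r > 0, S = closedBall c r := by
  obtain ⟨hSc, hSv, hSi⟩ := hS
  rcases IsBallSection.of_forall_dist_eq hSc hSv (subset_univ S) (fun _ _ _ => mem_univ _)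
    (fun x hx y _ hy => h x hx y (by simp) hy) with hempty | ⟨r, hr, hsection⟩
  · simp [hempty] at hSi
  have hball : S = closedBall c r := by rw [hsection]; ext; simp
  refine ⟨r, lt_of_le_of_ne hr ?_, hball⟩
  rintro rfl
  rw [hball, closedBall_zero, interior_singleton] at hSi
  exact not_nonempty_empty hSi

variable [FiniteDimensional ℝ W]

theorem IsConvexBody.image_affineEquiv {W' : Type*} [NormedAddCommGroup W']
    [InnerProductSpace ℝ W'] [FiniteDimensional ℝ W'] {K : Set W} (hK : IsConvexBody K)
    (g : W ≃ᵃ[ℝ] W') : IsConvexBody (g '' K) := by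
  obtain ⟨hKc, hKv, hKi⟩ := hK
  let e : W ≃ₜ W' := (AffineEquiv.toContinuousAffineEquiv g).toHomeomorph
  have he : ⇑e = g := rfl
  refine ⟨he ▸ hKc.image e.continuous, hKv.affine_image g.toAffineMap, ?_⟩
  rw [← he, ← e.image_interior]
  exact hKi.image _

theorem IsConvexBody.image_orthogonalProjectionOnto {K : Set W} (hK : IsConvexBody K)
    (E : Submodule ℝ W) : IsConvexBody (E.orthogonalProjectionOnto '' K) := by
  obtain ⟨hKc, hKv, hKi⟩ := hK
  have hP : IsOpenMap E.orthogonalProjectionOnto := E.orthogonalProjectionOnto.isOpenMap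
    fun y => ⟨y, orthogonalProjectionOnto_mem_subspace_eq_self y⟩
  exact ⟨hKc.image (map_continuous _), hKv.linear_image E.orthogonalProjectionOnto.toLinearMap,
    (hKi.image _).mono (hP.image_interior_subset K)⟩

theorem nontrivial_orthogonal_span_singleton (h : 2 ≤ Module.finrank ℝ W) (u : W) :
    Nontrivial (ℝ ∙ u)ᗮ := by
  apply Module.nontrivial_of_finrank_pos (R := ℝ)
  have := (ℝ ∙ u).finrank_add_finrank_orthogonal
  have := finrank_span_le_card (R := ℝ) ({u} : Set W)
  simp only [toFinset_singleton, Finset.card_singleton] at this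
  omega

theorem IsAffineBodyOfRevolutionAxis.exists_affineEquiv_isAxiallySymmetric_projection
    {K : Set W} {p v : W} (hax : IsAffineBodyOfRevolutionAxis K p v) (hK : IsConvexBody K)
    {u : W} (hu : u ≠ 0) :
    ∃ G : (ℝ ∙ u)ᗮ ≃ᵃ[ℝ] (ℝ ∙ u)ᗮ,
      IsConvexBody (G '' ((ℝ ∙ u)ᗮ.orthogonalProjectionOnto '' K)) ∧
      IsAxiallySymmetric (G '' ((ℝ ∙ u)ᗮ.orthogonalProjectionOnto '' K))
        (G ((ℝ ∙ u)ᗮ.orthogonalProjectionOnto p))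
        (G.linear ((ℝ ∙ u)ᗮ.orthogonalProjectionOnto v)) := by
  obtain ⟨g, hg⟩ := hax
  obtain ⟨R, c, hc, hRu⟩ :=
    exists_linearIsometryEquiv_apply_eq_smul (g.linear.map_ne_zero_iff.mpr hu) hu
  set g' := g.trans R.toLinearEquiv.toAffineEquiv
  obtain ⟨G, hG⟩ := exists_affineEquiv_orthogonalProjectionOnto_comp (ℝ ∙ u) g'
    (map_span_singleton_eq_of_apply_eq_smul hc hRu)
  set P := (ℝ ∙ u)ᗮ.orthogonalProjectionOnto
  have hGK : G '' (P '' K) = P '' (g' '' K) := by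
    rw [image_image, image_image]
    exact image_congr fun x _ => (hG x).1
  refine ⟨G, hGK ▸ (hK.image_affineEquiv g').image_orthogonalProjectionOnto _, ?_⟩
  rw [hGK, (hG p).1, (hG v).2, AffineEquiv.coe_trans, image_comp]
  exact (hg.isAxiallySymmetric.image_linearIsometryEquiv R).image_orthogonalProjectionOnto _

end InnerProductSpace

/-- The orthogonal projection (along a line ℓ = ℝ∙u) of an affine body
of revolution K ⊂ ℝ^n with axis of revolution the line through p with direction v
is an affine body of revolution; if the axis is parallel to ℓ the projection is an
ellipsoid, and otherwise the projected line is an axis of revolution of the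
projection. -/
theorem stmt_7 (n : ℕ) (hn : 3 ≤ n)
    (K : Set (EuclideanSpace ℝ (Fin n))) (hK : IsConvexBody K)
    (p v : EuclideanSpace ℝ (Fin n)) (hax : IsAffineBodyOfRevolutionAxis K p v)
    (u : EuclideanSpace ℝ (Fin n)) (hu : u ≠ 0) :
    IsAffineBodyOfRevolution ((Submodule.orthogonalProjection ((ℝ ∙ u)ᗮ)) '' K) ∧
    ((∃ t : ℝ, v = t • u) → IsEllipsoid ((Submodule.orthogonalProjection ((ℝ ∙ u)ᗮ)) '' K)) ∧
    (¬ (∃ t : ℝ, v = t • u) →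
      IsAffineBodyOfRevolutionAxis ((Submodule.orthogonalProjection ((ℝ ∙ u)ᗮ)) '' K)
        (Submodule.orthogonalProjection ((ℝ ∙ u)ᗮ) p) (Submodule.orthogonalProjection ((ℝ ∙ u)ᗮ) v)) := by
  have : Nontrivial (ℝ ∙ u)ᗮ :=
    nontrivial_orthogonal_span_singleton (by rw [finrank_euclideanSpace_fin]; omega) u
  obtain ⟨G, hbody, hsym⟩ := hax.exists_affineEquiv_isAxiallySymmetric_projection hK hu
  set P := (ℝ ∙ u)ᗮ.orthogonalProjectionOnto
  by_cases hpar : ∃ t : ℝ, v = t • u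
  · obtain ⟨t, rfl⟩ := hpar
    rw [map_smul, orthogonalProjectionOnto_orthogonalComplement_singleton_eq_zero, smul_zero,
      map_zero] at hsym
    obtain ⟨r, hr, hball⟩ := hsym.eq_closedBall hbody
    obtain ⟨w, hw⟩ := exists_ne (0 : (ℝ ∙ u)ᗮ)
    refine ⟨⟨P p, G.linear.symm w, G, ?_⟩, fun _ => ?_, fun h => absurd ⟨t, rfl⟩ h⟩
    · rw [LinearEquiv.apply_symm_apply]
      exact IsAxiallySymmetric.isBodyOfRevolutionAxis hw hbody.1 hbody.2.1
        (fun x hx y _ hy => hsym x hx y (by simp) hy)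
    · rw [← G.injective.preimage_image (P '' K), hball, ← G.image_symm]
      exact isEllipsoid_image_closedBall _ _ hr
  · have hPv : G.linear (P v) ≠ 0 := by
      rw [LinearEquiv.map_ne_zero_iff, Ne, orthogonalProjectionOnto_eq_zero_iff,
        orthogonal_orthogonal, mem_span_singleton]
      exact fun ⟨a, ha⟩ => hpar ⟨a, ha.symm⟩
    have hbor := hsym.isBodyOfRevolutionAxis hPv hbody.1 hbody.2.1
    exact ⟨⟨P p, P v, G, hbor⟩, fun h => absurd h hpar, fun _ => ⟨G, hbor⟩⟩
end

section
/- Let n ≥ 3 and let K ⊂ ℝ^n be a body of revolution with axis of revolution the line L. Let ℓ be a 1-dimensional linear subspace of ℝ^n and let π : ℝ^n → ℓ⊥ be the orthogonal projection along ℓ. If L is parallel to ℓ, then π(K) is a Euclidean ball in ℓ⊥; if L is not parallel to ℓ, then π(K) is a body of revolution in ℓ⊥ with axis of revolution π(L). -/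
open scoped RealInnerProductSpace

/-! A body of revolution is invariant under the rotations about its axis, and those rotations
that also fix the projection direction `u` commute with the projection along `u`. Hence the
projection of `K`, and each of its slices orthogonal to the projected axis, is a compact convex
set lying in an affine subspace `m + {u, v}ᗮ` and invariant under all rotations about `m` fixing
`u` and `v`. Such a set is a ball centered at `m`: the rotations carry a point `z` farthest from
`m` to its antipode, convexity fills in the diameter through `z`, and rotating the points of that
diameter reaches every point of `m + {u, v}ᗮ` within distance `‖z - m‖`. If the axis is parallel
to `u` the whole projection is such a set; otherwise each slice is. -/
section

variable {E : Type*} [NormedAddCommGroup E] [InnerProductSpace ℝ E]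

def IsRotInvariant (S : Set E) (m u v : E) : Prop :=
  ∀ A : E ≃ₗᵢ[ℝ] E, A u = u → A v = v → ∀ y ∈ S, m + A (y - m) ∈ S

lemma LinearIsometryEquiv.apply_eq_self_of_mem_span_pair (A : E ≃ₗᵢ[ℝ] E) {u v w : E}
    (hu : A u = u) (hv : A v = v) (hw : w ∈ Submodule.span ℝ {u, v}) : A w = w := by
  obtain ⟨a, b, rfl⟩ := Submodule.mem_span_pair.mp hw
  simp [hu, hv]

lemma exists_linearIsometryEquiv_fixing_apply_eq {u v a b : E} (hab : ‖a‖ = ‖b‖)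
    (hua : ⟪u, a⟫ = 0) (hub : ⟪u, b⟫ = 0) (hva : ⟪v, a⟫ = 0) (hvb : ⟪v, b⟫ = 0) :
    ∃ A : E ≃ₗᵢ[ℝ] E, A u = u ∧ A v = v ∧ A a = b := by
  have fixes : ∀ w, ⟪w, a⟫ = 0 → ⟪w, b⟫ = 0 → (ℝ ∙ (a - b))ᗮ.reflection w = w := fun w ha hb ↦
    Submodule.reflection_mem_subspace_eq_self <|
      Submodule.mem_orthogonal_singleton_iff_inner_left.mpr <| by
        rw [inner_sub_right, ha, hb, sub_zero]
  exact ⟨_, fixes u hua hub, fixes v hva hvb, Submodule.reflection_sub hab⟩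

namespace IsRotInvariant

variable {S : Set E} {m u v : E}

lemma of_sub_mem_span (hS : IsRotInvariant S m u v) {m' : E}
    (hm : m' - m ∈ Submodule.span ℝ {u, v}) : IsRotInvariant S m' u v := by
  intro A hAu hAv y hy
  have hfix := A.apply_eq_self_of_mem_span_pair hAu hAv hm
  convert hS A hAu hAv y hy using 1
  rw [show y - m' = (y - m) - (m' - m) by abel, map_sub, hfix]
  abel

lemma inter_setOf_inner_eq (hS : IsRotInvariant S m u v) {w : E}
    (hw : w ∈ Submodule.span ℝ {u, v}) (c : ℝ) :
    IsRotInvariant (S ∩ {y | ⟪y, w⟫ = c}) m u v := by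
  rintro A hAu hAv y ⟨hyS, hyc⟩
  refine ⟨hS A hAu hAv y hyS, ?_⟩
  have hinner : ⟪A (y - m), w⟫ = ⟪y - m, w⟫ := by
    conv_lhs => rw [← A.apply_eq_self_of_mem_span_pair hAu hAv hw]
    exact A.inner_map_map _ _
  simp only [Set.mem_ofPred_eq] at hyc ⊢
  rw [inner_add_left, hinner, inner_sub_left, hyc]
  ring

lemma add_mem_of_norm_eq (hS : IsRotInvariant S m u v) {e₁ e₂ : E} (hnorm : ‖e₁‖ = ‖e₂‖)
    (hu₁ : ⟪u, e₁⟫ = 0) (hu₂ : ⟪u, e₂⟫ = 0) (hv₁ : ⟪v, e₁⟫ = 0) (hv₂ : ⟪v, e₂⟫ = 0)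
    (he₁ : m + e₁ ∈ S) : m + e₂ ∈ S := by
  obtain ⟨A, hAu, hAv, hAe⟩ := exists_linearIsometryEquiv_fixing_apply_eq hnorm hu₁ hu₂ hv₁ hv₂
  simpa [hAe] using hS A hAu hAv _ he₁

lemma exists_eq_ball (hS : IsRotInvariant S m u v) (hcomp : IsCompact S) (hconv : Convex ℝ S)
    (hne : S.Nonempty) (horth : ∀ y ∈ S, ⟪u, y - m⟫ = 0 ∧ ⟪v, y - m⟫ = 0) :
    ∃ r, 0 ≤ r ∧ S = {y | (⟪u, y - m⟫ = 0 ∧ ⟪v, y - m⟫ = 0) ∧ dist y m ≤ r} := by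
  obtain ⟨z, hzS, hmax⟩ :=
    hcomp.exists_isMaxOn hne (continuous_id.dist continuous_const).continuousOn
  set r := dist z m
  refine ⟨r, dist_nonneg, Set.Subset.antisymm (fun y hy ↦ ⟨horth y hy, hmax hy⟩) ?_⟩
  rintro y ⟨⟨huy, hvy⟩, hyr⟩
  obtain ⟨huz, hvz⟩ := horth z hzS
  have hz : m + (z - m) ∈ S := by rwa [add_sub_cancel]
  have hantipode : m + -(z - m) ∈ S :=
    hS.add_mem_of_norm_eq (norm_neg _).symm huz (by rw [inner_neg_right, huz, neg_zero]) hvz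
      (by rw [inner_neg_right, hvz, neg_zero]) hz
  set t := dist y m / r
  have ht : t ∈ Set.Icc (0 : ℝ) 1 :=
    ⟨div_nonneg dist_nonneg dist_nonneg, div_le_one_of_le₀ hyr dist_nonneg⟩
  have hscaled : m + t • (z - m) ∈ S := by
    convert hconv.add_smul_sub_mem hantipode hz (t := (1 + t) / 2)
      ⟨by linarith [ht.1], by linarith [ht.2]⟩ using 1
    module
  have hnorm : ‖t • (z - m)‖ = ‖y - m‖ := by
    rw [norm_smul, ← dist_eq_norm, ← dist_eq_norm, Real.norm_of_nonneg ht.1,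
      div_mul_cancel_of_imp]
    intro hr
    exact le_antisymm (hr ▸ hyr) dist_nonneg
  simpa using hS.add_mem_of_norm_eq hnorm (by rw [inner_smul_right, huz, mul_zero]) huy
    (by rw [inner_smul_right, hvz, mul_zero]) hvy hscaled

end IsRotInvariant

lemma IsBodyOfRevolutionAxis.isRotInvariant {K : Set E} {p v : E}
    (hax : IsBodyOfRevolutionAxis K p v) (u : E) : IsRotInvariant K p u v := by
  intro A _ hAv x hx
  obtain ⟨-, hslice⟩ := hax
  set c := ⟪x, v⟫
  have hxc : x ∈ K ∩ {y | ⟪y, v⟫ = c} := ⟨hx, rfl⟩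
  rcases hslice c with hempty | ⟨r, -, hball⟩
  · exact absurd (hempty ▸ hxc) (Set.notMem_empty x)
  set q := p + ((c - ⟪p, v⟫) / ⟪v, v⟫) • v
  have hq : q = p + A (q - p) := by simp [q, hAv]
  have hinner : ⟪A (x - p), v⟫ = ⟪x - p, v⟫ := by
    conv_lhs => rw [← hAv]
    exact A.inner_map_map _ _
  rw [hball] at hxc
  suffices p + A (x - p) ∈ K ∩ {y | ⟪y, v⟫ = c} from this.1
  rw [hball]
  refine ⟨?_, ?_⟩
  · change ⟪p + A (x - p), v⟫ = c
    rw [inner_add_left, hinner, inner_sub_left]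
    ring
  · rw [hq, dist_add_left, A.dist_map, dist_sub_right]
    exact hxc.2

lemma starProjection_orthogonal_singleton_apply (u x : E) :
    (ℝ ∙ u)ᗮ.starProjection x = x - (⟪u, x⟫ / ‖u‖ ^ 2) • u := by
  rw [Submodule.starProjection_orthogonal, sub_apply, ContinuousLinearMap.id_apply,
    Submodule.starProjection_singleton]
  rfl

lemma LinearIsometryEquiv.starProjection_orthogonal_singleton_map (A : E ≃ₗᵢ[ℝ] E) {u : E}
    (hAu : A u = u) (x : E) :
    (ℝ ∙ u)ᗮ.starProjection (A x) = A ((ℝ ∙ u)ᗮ.starProjection x) := by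
  have hinner : ⟪u, A x⟫ = ⟪u, x⟫ := by
    conv_lhs => rw [← hAu]
    exact A.inner_map_map _ _
  rw [starProjection_orthogonal_singleton_apply, starProjection_orthogonal_singleton_apply,
    map_sub, map_smul, hAu, hinner]

lemma IsRotInvariant.image_starProjection {S : Set E} {m u v : E}
    (hS : IsRotInvariant S m u v) :
    IsRotInvariant ((ℝ ∙ u)ᗮ.starProjection '' S) ((ℝ ∙ u)ᗮ.starProjection m) u v := by
  rintro A hAu hAv _ ⟨x, hx, rfl⟩
  refine ⟨m + A (x - m), hS A hAu hAv x hx, ?_⟩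
  rw [map_add, A.starProjection_orthogonal_singleton_map hAu, map_sub]

lemma mem_image_orthogonalProjectionOnto_iff {U : Submodule ℝ E} [U.HasOrthogonalProjection]
    {K : Set E} (z : U) :
    z ∈ U.orthogonalProjectionOnto '' K ↔ (z : E) ∈ U.starProjection '' K :=
  ⟨fun ⟨x, hx, h⟩ ↦ ⟨x, hx, congrArg Subtype.val h⟩, fun ⟨x, hx, h⟩ ↦ ⟨x, hx, Subtype.ext h⟩⟩

variable {K : Set E} {p v u : E}

theorem IsBodyOfRevolutionAxis.exists_image_orthogonalProjectionOnto_eq_closedBall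
    (hax : IsBodyOfRevolutionAxis K p v) (hcomp : IsCompact K) (hconv : Convex ℝ K)
    (hne : K.Nonempty) (hvu : ∃ t : ℝ, v = t • u) :
    ∃ (q : (ℝ ∙ u)ᗮ) (r : ℝ), 0 ≤ r ∧
      (ℝ ∙ u)ᗮ.orthogonalProjectionOnto '' K = Metric.closedBall q r := by
  set Q := (ℝ ∙ u)ᗮ.starProjection
  obtain ⟨t, rfl⟩ := hvu
  have horthU : ∀ y ∈ (ℝ ∙ u)ᗮ, ⟪u, y - Q p⟫ = 0 ∧ ⟪t • u, y - Q p⟫ = 0 := fun y hy ↦ by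
    have hu : ⟪u, y - Q p⟫ = 0 := Submodule.mem_orthogonal_singleton_iff_inner_right.mp <|
      Submodule.sub_mem _ hy (Submodule.starProjection_apply_mem _ p)
    exact ⟨hu, by rw [real_inner_smul_left, hu, mul_zero]⟩
  have horth : ∀ y ∈ Q '' K, ⟪u, y - Q p⟫ = 0 ∧ ⟪t • u, y - Q p⟫ = 0 := by
    rintro _ ⟨x, -, rfl⟩
    exact horthU _ (Submodule.starProjection_apply_mem _ x)
  obtain ⟨r, hr, hball⟩ := (hax.isRotInvariant u).image_starProjection.exists_eq_ball
    (hcomp.image Q.continuous) (hconv.linear_image Q.toLinearMap) (hne.image Q) horth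
  refine ⟨(ℝ ∙ u)ᗮ.orthogonalProjectionOnto p, r, hr, ?_⟩
  ext z
  rw [mem_image_orthogonalProjectionOnto_iff, hball]
  simp only [Set.mem_ofPred_eq, Metric.mem_closedBall, Subtype.dist_eq,
    Submodule.coe_orthogonalProjectionOnto_apply]
  exact and_iff_right (horthU z z.2)

theorem IsBodyOfRevolutionAxis.image_orthogonalProjectionOnto
    (hax : IsBodyOfRevolutionAxis K p v) (hcomp : IsCompact K) (hconv : Convex ℝ K)
    (hvu : ¬ ∃ t : ℝ, v = t • u) :
    IsBodyOfRevolutionAxis ((ℝ ∙ u)ᗮ.orthogonalProjectionOnto '' K)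
      ((ℝ ∙ u)ᗮ.orthogonalProjectionOnto p) ((ℝ ∙ u)ᗮ.orthogonalProjectionOnto v) := by
  set U := (ℝ ∙ u)ᗮ
  set Q := U.starProjection
  have hv : ∀ w ∈ U, ⟪v, w⟫ = ⟪Q v, w⟫ := fun w hw ↦ by
    rw [Submodule.inner_starProjection_left_eq_right, Submodule.starProjection_eq_self_iff.mpr hw]
  have hQv : Q v ∈ Submodule.span ℝ {u, v} := by
    rw [starProjection_orthogonal_singleton_apply]
    exact Submodule.sub_mem _ (Submodule.subset_span (by simp))
      (Submodule.smul_mem _ _ (Submodule.subset_span (by simp)))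
  have hQv0 : Q v ≠ 0 := fun h ↦ hvu <| by
    rw [Submodule.starProjection_apply_eq_zero_iff, Submodule.orthogonal_orthogonal] at h
    obtain ⟨t, rfl⟩ := Submodule.mem_span_singleton.mp h
    exact ⟨t, rfl⟩
  refine ⟨fun h ↦ hQv0 (congrArg Subtype.val h), fun c ↦ ?_⟩
  set S := Q '' K ∩ {y | ⟪y, Q v⟫ = c}
  set m := Q p + ((c - ⟪Q p, Q v⟫) / ⟪Q v, Q v⟫) • Q v
  have hmU : m ∈ U := Submodule.add_mem _ (Submodule.starProjection_apply_mem _ p)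
    (Submodule.smul_mem _ _ (Submodule.starProjection_apply_mem _ v))
  have hmc : ⟪m, Q v⟫ = c := by
    have : ⟪Q v, Q v⟫ ≠ 0 := inner_self_ne_zero.mpr hQv0
    simp only [m, inner_add_left, real_inner_smul_left]
    field_simp
    ring
  have horthU : ∀ y ∈ U, (⟪u, y - m⟫ = 0 ∧ ⟪v, y - m⟫ = 0 ↔ ⟪y, Q v⟫ = c) := fun y hy ↦ by
    have hym : y - m ∈ U := Submodule.sub_mem _ hy hmU
    rw [Submodule.mem_orthogonal_singleton_iff_inner_right.mp hym, hv _ hym, inner_sub_right,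
      real_inner_comm, real_inner_comm m, hmc, sub_eq_zero]
    exact and_iff_right rfl
  have hslice : U.orthogonalProjectionOnto '' K ∩ {z | ⟪z, U.orthogonalProjectionOnto v⟫ = c} =
      Subtype.val ⁻¹' S := by
    ext z
    simp only [Set.mem_inter_iff, Set.mem_preimage, mem_image_orthogonalProjectionOnto_iff,
      Set.mem_ofPred_eq, Submodule.coe_inner, Submodule.coe_orthogonalProjectionOnto_apply]
    rfl
  rcases S.eq_empty_or_nonempty with hS | hS
  · exact Or.inl (by rw [hslice, hS, Set.preimage_empty])
  have hrot : IsRotInvariant S m u v :=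
    ((hax.isRotInvariant u).image_starProjection.of_sub_mem_span (by
      rw [add_sub_cancel_left]
      exact Submodule.smul_mem _ _ hQv)).inter_setOf_inner_eq hQv c
  have hclosed : IsClosed {y | ⟪y, Q v⟫ = c} :=
    isClosed_eq (continuous_id.inner continuous_const) continuous_const
  have hconvex : Convex ℝ {y | ⟪y, Q v⟫ = c} :=
    convex_hyperplane ⟨fun _ _ ↦ inner_add_left _ _ _, fun _ _ ↦ real_inner_smul_left _ _ _⟩ c
  obtain ⟨r, hr, hball⟩ := hrot.exists_eq_ball
    ((hcomp.image Q.continuous).inter_right hclosed)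
    ((hconv.linear_image Q.toLinearMap).inter hconvex) hS
    (fun y ⟨⟨x, _, hx⟩, hyc⟩ ↦ (horthU y (hx ▸ Submodule.starProjection_apply_mem _ x)).mpr hyc)
  refine Or.inr ⟨r, hr, ?_⟩
  rw [hslice, hball]
  ext z
  exact and_congr_left' (horthU z z.2)

end

theorem stmt_8_general (n : ℕ)
    (K : Set (EuclideanSpace ℝ (Fin n))) (hK : IsConvexBody K)
    (p v : EuclideanSpace ℝ (Fin n)) (hax : IsBodyOfRevolutionAxis K p v)
    (u : EuclideanSpace ℝ (Fin n)) :
    ((∃ t : ℝ, v = t • u) → ∃ (q : ↥((ℝ ∙ u)ᗮ)) (r : ℝ), 0 ≤ r ∧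
      (Submodule.orthogonalProjectionOnto ((ℝ ∙ u)ᗮ)) '' K = Metric.closedBall q r) ∧
    (¬ (∃ t : ℝ, v = t • u) →
      IsBodyOfRevolutionAxis ((Submodule.orthogonalProjectionOnto ((ℝ ∙ u)ᗮ)) '' K)
        (Submodule.orthogonalProjectionOnto ((ℝ ∙ u)ᗮ) p) (Submodule.orthogonalProjectionOnto ((ℝ ∙ u)ᗮ) v)) := by
  obtain ⟨hcomp, hconv, hint⟩ := hK
  exact ⟨hax.exists_image_orthogonalProjectionOnto_eq_closedBall hcomp hconv
    (hint.mono interior_subset), hax.image_orthogonalProjectionOnto hcomp hconv⟩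

/-- The orthogonal projection (along a line ℓ = ℝ∙u) of a body of
revolution K ⊂ ℝ^n with axis of revolution the line through p with direction v is:
a Euclidean ball if the axis is parallel to ℓ, and otherwise a body of revolution
with axis of revolution the projected line. -/
theorem stmt_8 (n : ℕ) (hn : 3 ≤ n)
    (K : Set (EuclideanSpace ℝ (Fin n))) (hK : IsConvexBody K)
    (p v : EuclideanSpace ℝ (Fin n)) (hax : IsBodyOfRevolutionAxis K p v)
    (u : EuclideanSpace ℝ (Fin n)) (hu : u ≠ 0) :
    ((∃ t : ℝ, v = t • u) → ∃ (q : ↥((ℝ ∙ u)ᗮ)) (r : ℝ), 0 ≤ r ∧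
      (Submodule.orthogonalProjectionOnto ((ℝ ∙ u)ᗮ)) '' K = Metric.closedBall q r) ∧
    (¬ (∃ t : ℝ, v = t • u) →
      IsBodyOfRevolutionAxis ((Submodule.orthogonalProjectionOnto ((ℝ ∙ u)ᗮ)) '' K)
        (Submodule.orthogonalProjectionOnto ((ℝ ∙ u)ᗮ) p) (Submodule.orthogonalProjectionOnto ((ℝ ∙ u)ᗮ) v)) :=
  stmt_8_general n K hK p v hax u
end

section
/- Let n ≥ 3 and let K ⊂ ℝ^n be an affine body of revolution with hyperplane of revolution H. Let ℓ be a 1-dimensional linear subspace of ℝ^n parallel to H (i.e., ℓ is contained in the direction hyperplane of H), and let π : ℝ^n → ℓ⊥ be the orthogonal projection along ℓ. If π(K) is an ellipsoid, then K is an ellipsoid. -/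
open scoped RealInnerProductSpace

/-!
After an affine change of coordinates, `K` is a body of revolution about a line `ℝ v` through the
origin and the direction `u` of projection is orthogonal to `v`; since `n ≥ 3` there is a unit
vector `e` orthogonal to both. Every section of `K` orthogonal to the axis is a ball centred on the
axis, so a point `t • v + s • e` of the meridian plane lies in `K` exactly when its line parallel
to `u` meets `K`. Hence the meridian section of `K` is a section of the ellipsoid `π(K)`: the set
`‖a₀ + t • a₁ + s • a₂‖ ≤ 1` for an affine map. Its symmetry under `s ↦ -s` forces
`⟪a₀ + t • a₁, a₂⟫ = 0`, and then `K = {x | α (⟪x, v⟫ - c)² + β ‖x - ⟪x, v⟫ • v‖² ≤ ρ}`, which an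
axial scaling maps onto the unit ball.
-/

section

variable {W V : Type*} [NormedAddCommGroup W] [InnerProductSpace ℝ W] [NormedAddCommGroup V]
  [InnerProductSpace ℝ V]

theorem norm_sq_eq_inner_sq_add_norm_sub_smul_sq {v : W} (hv : ‖v‖ = 1) (y : W) :
    ‖y‖ ^ 2 = ⟪y, v⟫ ^ 2 + ‖y - ⟪y, v⟫ • v‖ ^ 2 := by
  have h := norm_sub_sq_real y (⟪y, v⟫ • v)
  rw [real_inner_smul_right, norm_smul, Real.norm_eq_abs, hv, mul_one] at h
  nlinarith [sq_abs ⟪y, v⟫]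

theorem exists_norm_eq_one_inner_eq_zero [FiniteDimensional ℝ W] (hW : 3 ≤ Module.finrank ℝ W)
    (v u : W) : ∃ e : W, ‖e‖ = 1 ∧ ⟪e, v⟫ = 0 ∧ ⟪e, u⟫ = 0 := by
  have hP : Submodule.span ℝ ({v, u} : Set W) ≠ ⊤ := fun h => by
    classical
    have hle := finrank_span_finset_le_card (R := ℝ) ({v, u} : Finset W)
    rw [Set.finrank, Finset.coe_insert, Finset.coe_singleton, h, finrank_top] at hle
    have := Finset.card_le_two (a := v) (b := u)
    omega
  obtain ⟨e₀, he₀P, he₀⟩ :=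
    Submodule.exists_mem_ne_zero_of_ne_bot (mt Submodule.orthogonal_eq_bot_iff.1 hP)
  have hperp : ∀ w ∈ ({v, u} : Set W), ⟪e₀, w⟫ = 0 := fun w hw =>
    Submodule.inner_left_of_mem_orthogonal (Submodule.subset_span hw) he₀P
  refine ⟨‖e₀‖⁻¹ • e₀, norm_smul_inv_norm he₀, ?_, ?_⟩ <;>
    simp [real_inner_smul_left, hperp]

theorem exists_mem_inner_ne_of_interior_nonempty {K : Set W} (hK : (interior K).Nonempty)
    {v : W} (hv : v ≠ 0) : ∃ x₀ ∈ K, ∃ x₁ ∈ K, ⟪x₀, v⟫ ≠ ⟪x₁, v⟫ := by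
  obtain ⟨x, hx⟩ := hK
  obtain ⟨ε, hε, hball⟩ := Metric.isOpen_iff.1 isOpen_interior x hx
  have hv' : 0 < ‖v‖ := norm_pos_iff.2 hv
  set δ := ε / (2 * ‖v‖)
  have hδ : x + δ • v ∈ interior K := hball <| by
    rw [Metric.mem_ball, dist_eq_norm, add_sub_cancel_left, norm_smul, Real.norm_eq_abs,
      abs_of_pos (by positivity), div_mul_eq_mul_div, mul_div_mul_right _ _ hv'.ne']
    linarith
  refine ⟨x, interior_subset hx, x + δ • v, interior_subset hδ, fun h => ?_⟩
  rw [inner_add_left, real_inner_smul_left, real_inner_self_eq_norm_sq, left_eq_add] at h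
  have : 0 < δ * ‖v‖ ^ 2 := by positivity
  linarith

theorem eq_zero_and_pos_of_forall_quadratic_le_one_iff {A L B r : ℝ} (hr : 0 ≤ r)
    (h : ∀ s : ℝ, A + L * s + B * s ^ 2 ≤ 1 ↔ |s| ≤ r) : L = 0 ∧ 0 < B := by
  have hA : A ≤ 1 := by simpa using (h 0).2 (by simpa using hr)
  have hB : 0 < B := by
    by_contra! hB
    -- far out on the side where `L * s ≤ 0`, the quadratic stays below `A ≤ 1`
    obtain ⟨s, hLs, hs⟩ : ∃ s : ℝ, L * s ≤ 0 ∧ r < |s| := by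
      rcases le_total 0 L with hL | hL
      · exact ⟨-(r + 1), by nlinarith, by rw [abs_of_neg (by linarith)]; linarith⟩
      · exact ⟨r + 1, by nlinarith, by rw [abs_of_pos (by linarith)]; linarith⟩
    exact absurd ((h s).1 (by nlinarith [sq_nonneg s])) (not_le.2 hs)
  refine ⟨?_, hB⟩
  -- the quadratic is symmetric about `-L / (2 * B)`, so it takes equal values at `±r` and at
  -- their reflections `-L / B ∓ r`; those must lie in `[-r, r]` too
  have reflect : ∀ s, A + L * (-L / B - s) + B * (-L / B - s) ^ 2 = A + L * s + B * s ^ 2 := by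
    intro s; field_simp; ring
  have h₁ := (h _).1 ((reflect r).symm ▸ (h r).2 (abs_of_nonneg hr).le)
  have h₂ := (h _).1 ((reflect (-r)).symm ▸ (h (-r)).2 (by rw [abs_neg, abs_of_nonneg hr]))
  rw [abs_le] at h₁ h₂
  have : -L / B = 0 := by linarith
  simpa [hB.ne'] using this

theorem inner_eq_zero_and_ne_zero_of_forall_norm_add_smul_le_one_iff {a b : V} {r : ℝ} (hr : 0 ≤ r)
    (h : ∀ s : ℝ, ‖a + s • b‖ ≤ 1 ↔ |s| ≤ r) : ⟪a, b⟫ = 0 ∧ b ≠ 0 := by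
  have hquad : ∀ s : ℝ, ‖a‖ ^ 2 + 2 * ⟪a, b⟫ * s + ‖b‖ ^ 2 * s ^ 2 ≤ 1 ↔ |s| ≤ r := by
    intro s
    rw [← h s, ← sq_le_one_iff₀ (norm_nonneg _), norm_add_sq_real, real_inner_smul_right,
      norm_smul, mul_pow, Real.norm_eq_abs, sq_abs]
    ring_nf
  obtain ⟨hab, hb⟩ := eq_zero_and_pos_of_forall_quadratic_le_one_iff hr hquad
  exact ⟨by linarith, fun hb0 => by simp [hb0] at hb⟩

theorem orthogonalProjectionOnto_mem_image_iff {K : Set W} {u z : W} :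
    (ℝ ∙ u)ᗮ.orthogonalProjectionOnto z ∈ (ℝ ∙ u)ᗮ.orthogonalProjectionOnto '' K ↔
      ∃ c : ℝ, z + c • u ∈ K := by
  constructor
  · rintro ⟨k, hk, hkz⟩
    have : k - z ∈ ℝ ∙ u := by
      rw [← Submodule.orthogonal_orthogonal (ℝ ∙ u),
        ← Submodule.orthogonalProjectionOnto_eq_zero_iff, map_sub, hkz, sub_self]
    obtain ⟨c, hc⟩ := Submodule.mem_span_singleton.1 this
    exact ⟨c, by rwa [hc, add_sub_cancel]⟩
  · rintro ⟨c, hc⟩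
    have hcu : c • u ∈ (ℝ ∙ u)ᗮᗮ := Submodule.le_orthogonal_orthogonal _
      (Submodule.smul_mem _ c (Submodule.mem_span_singleton_self u))
    refine ⟨z + c • u, hc, ?_⟩
    rw [map_add, Submodule.orthogonalProjectionOnto_eq_zero_iff.2 hcu, add_zero]

theorem inner_linear_eq_zero_of_image_eq {H : Set W} {u v : W} (g : W ≃ᵃ[ℝ] W)
    (hgH : g '' H = {y | ⟪y, v⟫ = 0}) (hpar : ∀ y ∈ H, y + u ∈ H) : ⟪g.linear u, v⟫ = 0 := by
  obtain ⟨y, hy, hgy⟩ : (0 : W) ∈ g '' H := by simp [hgH]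
  have := Set.mem_image_of_mem g (hpar y hy)
  rwa [hgH, add_comm, ← vadd_eq_add, g.map_vadd, hgy, vadd_eq_add, add_zero] at this

theorem isEllipsoid_of_forall_apply_mem_iff {S : Set W} (φ : W ≃ᵃ[ℝ] W)
    (h : ∀ y, φ y ∈ S ↔ ‖y‖ ≤ 1) : IsEllipsoid S := by
  refine ⟨φ, Set.ext fun x => ⟨fun hx => ?_, ?_⟩⟩
  · exact ⟨φ.symm x, mem_closedBall_zero_iff.2 ((h _).1 (by rwa [φ.apply_symm_apply])),
      φ.apply_symm_apply x⟩
  · rintro ⟨y, hy, rfl⟩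
    exact (h y).2 (mem_closedBall_zero_iff.1 hy)

theorem IsEllipsoid.of_image {K : Set W} (g : W ≃ᵃ[ℝ] W) (h : IsEllipsoid (g '' K)) :
    IsEllipsoid K := by
  obtain ⟨φ, hφ⟩ := h
  refine ⟨φ.trans g.symm, ?_⟩
  rw [AffineEquiv.coe_trans, Set.image_comp, ← hφ, g.image_symm,
    Set.preimage_image_eq _ g.injective]

/-- For a unit vector `v`, the linear map scaling by `a` along `v` and by `b` orthogonally
to `v`. -/
noncomputable def axialScaling (v : W) (a b : ℝ) : W →ₗ[ℝ] W :=
  b • LinearMap.id + (a - b) • (innerₛₗ ℝ v).smulRight v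

theorem axialScaling_apply (v : W) (a b : ℝ) (y : W) :
    axialScaling v a b y = b • y + (a - b) • ⟪y, v⟫ • v := by
  simp [axialScaling, real_inner_comm]

theorem axialScaling_one_one (v : W) : axialScaling v 1 1 = LinearMap.id := by
  ext y
  simp [axialScaling_apply]

section UnitVector

variable {v : W} (hv : ‖v‖ = 1)
include hv

theorem inner_axialScaling (a b : ℝ) (y : W) : ⟪axialScaling v a b y, v⟫ = a * ⟪y, v⟫ := by
  have hvv : ⟪v, v⟫ = 1 := by rw [real_inner_self_eq_norm_sq, hv, one_pow]
  simp only [axialScaling_apply, inner_add_left, real_inner_smul_left, hvv]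
  ring

theorem axialScaling_comp (a b a' b' : ℝ) :
    axialScaling v a b ∘ₗ axialScaling v a' b' = axialScaling v (a * a') (b * b') := by
  ext y
  rw [LinearMap.comp_apply, axialScaling_apply v a b, inner_axialScaling hv,
    axialScaling_apply, axialScaling_apply]
  match_scalars <;> ring

noncomputable def axialScalingEquiv {a b : ℝ} (ha : a ≠ 0) (hb : b ≠ 0) : W ≃ₗ[ℝ] W :=
  LinearEquiv.ofLinearMap (axialScaling v a b) (axialScaling v a⁻¹ b⁻¹)
    (by rw [axialScaling_comp hv, mul_inv_cancel₀ ha, mul_inv_cancel₀ hb, axialScaling_one_one])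
    (by rw [axialScaling_comp hv, inv_mul_cancel₀ ha, inv_mul_cancel₀ hb, axialScaling_one_one])

theorem isEllipsoid_spheroid {α β ρ : ℝ} (hα : 0 < α) (hβ : 0 < β) (hρ : 0 < ρ) (c : ℝ) :
    IsEllipsoid {x : W | α * (⟪x, v⟫ - c) ^ 2 + β * ‖x - ⟪x, v⟫ • v‖ ^ 2 ≤ ρ} := by
  set p := √(ρ / α)
  set q := √(ρ / β)
  have hp : α * p ^ 2 = ρ := by rw [Real.sq_sqrt (by positivity)]; field_simp
  have hq : β * q ^ 2 = ρ := by rw [Real.sq_sqrt (by positivity)]; field_simp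
  let φ := (axialScalingEquiv hv (a := p) (b := q) (by positivity) (by positivity)).toAffineEquiv
    |>.trans (AffineEquiv.constVAdd ℝ W (c • v))
  have hφ : ∀ y, φ y = c • v + axialScaling v p q y := fun y => rfl
  refine isEllipsoid_of_forall_apply_mem_iff φ fun y => ?_
  have hφv : ⟪φ y, v⟫ - c = p * ⟪y, v⟫ := by
    rw [hφ, inner_add_left, inner_axialScaling hv, real_inner_smul_left,
      real_inner_self_eq_norm_sq, hv]
    ring
  have hφperp : φ y - ⟪φ y, v⟫ • v = q • (y - ⟪y, v⟫ • v) := by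
    rw [show ⟪φ y, v⟫ = c + p * ⟪y, v⟫ by linarith, hφ, axialScaling_apply]
    match_scalars <;> ring
  have hval : α * (⟪φ y, v⟫ - c) ^ 2 + β * ‖φ y - ⟪φ y, v⟫ • v‖ ^ 2 = ρ * ‖y‖ ^ 2 := by
    rw [hφv, hφperp, norm_smul, Real.norm_eq_abs, mul_pow, mul_pow, sq_abs,
      norm_sq_eq_inner_sq_add_norm_sub_smul_sq hv y]
    linear_combination ⟪y, v⟫ ^ 2 * hp + ‖y - ⟪y, v⟫ • v‖ ^ 2 * hq
  rw [Set.mem_ofPred_eq, hval, mul_le_iff_le_one_right hρ, sq_le_one_iff₀ (norm_nonneg y)]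

theorem exists_smul_add_notMem_of_isBounded {K : Set W} (hK : Bornology.IsBounded K) (x : W) :
    ∃ t : ℝ, t • v + x ∉ K := by
  obtain ⟨C, hC⟩ := hK.exists_norm_le
  refine ⟨|C| + ‖x‖ + 1, fun hmem => ?_⟩
  have htri := norm_sub_norm_le ((|C| + ‖x‖ + 1) • v) (-x)
  rw [sub_neg_eq_add, norm_neg, norm_smul, hv, mul_one, Real.norm_eq_abs,
    abs_of_pos (by positivity)] at htri
  linarith [le_abs_self C, hC _ hmem]

theorem isEllipsoid_of_forall_mem_iff_quadric {K : Set W} {a₀ a₁ : V} {β : ℝ}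
    (hβ : 0 < β) (hK : ∀ x, x ∈ K ↔ ‖a₀ + ⟪x, v⟫ • a₁‖ ^ 2 + β * ‖x - ⟪x, v⟫ • v‖ ^ 2 ≤ 1)
    (hbdd : Bornology.IsBounded K) {x₀ x₁ : W} (hx₀ : x₀ ∈ K) (hx₁ : x₁ ∈ K)
    (hne : ⟪x₀, v⟫ ≠ ⟪x₁, v⟫) : IsEllipsoid K := by
  have ha₁ : a₁ ≠ 0 := by
    rintro rfl
    obtain ⟨t, ht⟩ := exists_smul_add_notMem_of_isBounded hv hbdd x₀
    have hperp : t • v + x₀ - ⟪t • v + x₀, v⟫ • v = x₀ - ⟪x₀, v⟫ • v := by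
      rw [inner_add_left, real_inner_smul_left, real_inner_self_eq_norm_sq, hv]
      module
    exact ht (by simpa [hK, hperp] using (hK x₀).1 hx₀)
  have hα : 0 < ‖a₁‖ ^ 2 := pow_pos (norm_pos_iff.2 ha₁) 2
  set c := -⟪a₀, a₁⟫ / ‖a₁‖ ^ 2
  set ρ := 1 - ‖a₀‖ ^ 2 + ⟪a₀, a₁⟫ ^ 2 / ‖a₁‖ ^ 2
  have hK' : ∀ x, x ∈ K ↔ ‖a₁‖ ^ 2 * (⟪x, v⟫ - c) ^ 2 + β * ‖x - ⟪x, v⟫ • v‖ ^ 2 ≤ ρ := by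
    intro x
    have hsq : ‖a₀ + ⟪x, v⟫ • a₁‖ ^ 2 = ‖a₁‖ ^ 2 * (⟪x, v⟫ - c) ^ 2 + (1 - ρ) := by
      rw [norm_add_sq_real, real_inner_smul_right, norm_smul, mul_pow, Real.norm_eq_abs, sq_abs]
      simp only [c, ρ]
      field_simp
      ring
    rw [hK, hsq]
    constructor <;> intro h <;> linarith
  have hρ : 0 < ρ := by
    by_contra! hρ
    have hc : ∀ x ∈ K, ⟪x, v⟫ = c := fun x hx => by
      have hx' := (hK' x).1 hx
      have hsq : (⟪x, v⟫ - c) ^ 2 = 0 := by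
        nlinarith [sq_nonneg (⟪x, v⟫ - c), sq_nonneg ‖x - ⟪x, v⟫ • v‖]
      exact sub_eq_zero.1 (pow_eq_zero_iff two_ne_zero |>.1 hsq)
    exact hne ((hc x₀ hx₀).trans (hc x₁ hx₁).symm)
  rw [show K = _ from Set.ext hK']
  exact isEllipsoid_spheroid hv hα hβ hρ c

end UnitVector

namespace IsBodyOfRevolutionAxis

variable {K : Set W} {v : W}

theorem smul (h : IsBodyOfRevolutionAxis K 0 v) {a : ℝ} (ha : a ≠ 0) :
    IsBodyOfRevolutionAxis K 0 (a • v) := by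
  refine ⟨smul_ne_zero ha h.1, fun c => ?_⟩
  have hslice : {y : W | ⟪y, a • v⟫ = c} = {y : W | ⟪y, v⟫ = c / a} := by
    ext y
    simp only [Set.mem_ofPred_eq, real_inner_smul_right]
    constructor <;> intro hy <;> field_simp at hy ⊢ <;> linarith
  have hcenter : ((c - ⟪(0 : W), a • v⟫) / ⟪a • v, a • v⟫) • (a • v)
      = ((c / a - ⟪(0 : W), v⟫) / ⟪v, v⟫) • v := by
    simp only [inner_zero_left, sub_zero, real_inner_smul_left, real_inner_smul_right, smul_smul]
    congr 1
    field_simp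
  rw [hslice, zero_add, hcenter, ← zero_add (_ • v)]
  exact h.2 (c / a)

variable (hv : ‖v‖ = 1)
include hv

theorem exists_radius (h : IsBodyOfRevolutionAxis K 0 v) {x : W} (hx : x ∈ K) :
    ∃ r, ∀ y, ⟪y, v⟫ = ⟪x, v⟫ → (y ∈ K ↔ ‖y - ⟪x, v⟫ • v‖ ≤ r) := by
  have hvv : ⟪v, v⟫ = 1 := by rw [real_inner_self_eq_norm_sq, hv, one_pow]
  rcases h.2 ⟪x, v⟫ with hempty | ⟨r, -, hball⟩
  · exact (hempty ▸ ⟨hx, rfl⟩ : x ∈ (∅ : Set W)).elim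
  refine ⟨r, fun y hy => ?_⟩
  have := congrArg (y ∈ ·) hball
  simp only [Set.mem_inter_iff, Set.mem_ofPred_eq, hy, and_true, true_and, inner_zero_left,
    sub_zero, hvv, div_one, zero_add, dist_eq_norm] at this
  exact Iff.of_eq this

theorem mem_of_inner_eq_of_norm_le (h : IsBodyOfRevolutionAxis K 0 v) {x y : W} (hx : x ∈ K)
    (hxy : ⟪y, v⟫ = ⟪x, v⟫) (hle : ‖y - ⟪y, v⟫ • v‖ ≤ ‖x - ⟪x, v⟫ • v‖) : y ∈ K := by
  obtain ⟨r, hr⟩ := h.exists_radius hv hx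
  rw [hr y hxy, ← hxy]
  exact hle.trans (hxy ▸ (hr x rfl).1 hx)

theorem mem_iff_of_inner_eq_of_norm_eq (h : IsBodyOfRevolutionAxis K 0 v) {x y : W}
    (hxy : ⟪y, v⟫ = ⟪x, v⟫) (hn : ‖y - ⟪y, v⟫ • v‖ = ‖x - ⟪x, v⟫ • v‖) : y ∈ K ↔ x ∈ K :=
  ⟨fun hy => h.mem_of_inner_eq_of_norm_le hv hy hxy.symm hn.ge,
    fun hx => h.mem_of_inner_eq_of_norm_le hv hx hxy hn.le⟩

theorem mem_of_add_smul_mem (h : IsBodyOfRevolutionAxis K 0 v) {u w : W} {c : ℝ}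
    (huv : ⟪u, v⟫ = 0) (hwu : ⟪w, u⟫ = 0) (hw : w + c • u ∈ K) : w ∈ K := by
  refine h.mem_of_inner_eq_of_norm_le hv hw ?_ ?_
  · simp [inner_add_left, real_inner_smul_left, huv]
  · have hperp : ⟪w - ⟪w, v⟫ • v, c • u⟫ = 0 := by
      simp [inner_sub_left, real_inner_smul_left, real_inner_smul_right, hwu,
        real_inner_comm u v ▸ huv]
    have hinner : ⟪w + c • u, v⟫ = ⟪w, v⟫ := by
      simp [inner_add_left, real_inner_smul_left, huv]
    rw [hinner, show w + c • u - ⟪w, v⟫ • v = (w - ⟪w, v⟫ • v) + c • u by abel,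
      mul_self_le_mul_self_iff (norm_nonneg _) (norm_nonneg _),
      norm_add_sq_eq_norm_sq_add_norm_sq_real hperp]
    exact le_add_of_nonneg_right (mul_self_nonneg _)

theorem isEllipsoid_of_meridian {e : W} (h : IsBodyOfRevolutionAxis K 0 v)
    (hbdd : Bornology.IsBounded K) (hint : (interior K).Nonempty) (he : ‖e‖ = 1) (hev : ⟪e, v⟫ = 0)
    (Φ : W →ᵃ[ℝ] V) (hΦ : ∀ t s : ℝ, t • v + s • e ∈ K ↔ ‖Φ (t • v + s • e)‖ ≤ 1) :
    IsEllipsoid K := by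
  set a₀ := Φ 0
  set a₁ := Φ.linear v
  set a₂ := Φ.linear e
  have hΦ' : ∀ t s : ℝ, Φ (t • v + s • e) = (a₀ + t • a₁) + s • a₂ := by
    intro t s
    rw [Φ.decomp, Pi.add_apply, map_add, map_smul, map_smul]
    abel
  have hmeridian : ∀ t s : ℝ, ⟪t • v + s • e, v⟫ = t ∧ t • v + s • e - t • v = s • e := by
    intro t s
    refine ⟨?_, add_sub_cancel_left _ _⟩
    rw [inner_add_left, real_inner_smul_left, real_inner_smul_left, real_inner_self_eq_norm_sq,
      hv, hev]
    ring
  have hslice : ∀ x ∈ K, ⟪a₀ + ⟪x, v⟫ • a₁, a₂⟫ = 0 ∧ a₂ ≠ 0 := by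
    intro x hx
    obtain ⟨r, hr⟩ := h.exists_radius hv hx
    have hr₀ : 0 ≤ r := (norm_nonneg _).trans ((hr x rfl).1 hx)
    refine inner_eq_zero_and_ne_zero_of_forall_norm_add_smul_le_one_iff hr₀ fun s => ?_
    obtain ⟨hinner, hsub⟩ := hmeridian ⟪x, v⟫ s
    rw [← hΦ', ← hΦ, hr _ hinner, hsub, norm_smul, he, mul_one, Real.norm_eq_abs]
  obtain ⟨x₀, hx₀, x₁, hx₁, hne⟩ :=
    exists_mem_inner_ne_of_interior_nonempty hint (norm_ne_zero_iff.1 (hv.trans_ne one_ne_zero))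
  obtain ⟨h₀, ha₂⟩ := hslice x₀ hx₀
  obtain ⟨h₁, -⟩ := hslice x₁ hx₁
  have hperp : ∀ t : ℝ, ⟪a₀ + t • a₁, a₂⟫ = 0 := by
    simp only [inner_add_left, real_inner_smul_left] at h₀ h₁ ⊢
    have h₁₂ : ⟪a₁, a₂⟫ = 0 :=
      (mul_eq_zero.1 (by linear_combination h₀ - h₁ : (⟪x₀, v⟫ - ⟪x₁, v⟫) * ⟪a₁, a₂⟫ = 0))
        |>.resolve_left (sub_ne_zero.2 hne)
    intro t
    rw [h₁₂] at h₀ ⊢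
    linarith
  refine isEllipsoid_of_forall_mem_iff_quadric hv (a₀ := a₀) (a₁ := a₁)
    (pow_pos (norm_pos_iff.2 ha₂) 2) (fun x => ?_) hbdd hx₀ hx₁ hne
  have hmem : x ∈ K ↔ ⟪x, v⟫ • v + ‖x - ⟪x, v⟫ • v‖ • e ∈ K := by
    obtain ⟨hinner, hsub⟩ := hmeridian ⟪x, v⟫ ‖x - ⟪x, v⟫ • v‖
    refine (h.mem_iff_of_inner_eq_of_norm_eq hv hinner ?_).symm
    rw [hinner, hsub, norm_smul, he, mul_one, norm_norm]
  rw [hmem, hΦ, hΦ', ← sq_le_one_iff₀ (norm_nonneg _), norm_add_sq_real, real_inner_smul_right,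
    hperp, norm_smul, mul_pow, norm_norm]
  ring_nf

end IsBodyOfRevolutionAxis

end

theorem stmt_9_general (n : ℕ) (hn : 3 ≤ n)
    (K : Set (EuclideanSpace ℝ (Fin n))) (hK : IsConvexBody K)
    (H : Set (EuclideanSpace ℝ (Fin n)))
    (hrev : ∃ L : Set (EuclideanSpace ℝ (Fin n)), IsAffineBORAxisHyp K L H)
    (u : EuclideanSpace ℝ (Fin n))
    (hpar : ∀ y ∈ H, y + u ∈ H)
    (hell : IsEllipsoid ((Submodule.orthogonalProjectionOnto ((ℝ ∙ u)ᗮ)) '' K)) :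
    IsEllipsoid K := by
  obtain ⟨-, g, v₀, hrev, -, hgH⟩ := hrev
  obtain ⟨E, hE⟩ := hell
  set π := (ℝ ∙ u)ᗮ.orthogonalProjectionOnto
  set u' := g.linear u
  set v := ‖v₀‖⁻¹ • v₀
  have hv : ‖v‖ = 1 := norm_smul_inv_norm hrev.1
  have hrev' : IsBodyOfRevolutionAxis (g '' K) 0 v :=
    hrev.smul (inv_ne_zero (norm_ne_zero_iff.2 hrev.1))
  have hu'v : ⟪u', v⟫ = 0 := by
    rw [real_inner_smul_right, inner_linear_eq_zero_of_image_eq g hgH hpar, mul_zero]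
  obtain ⟨e, he, hev, heu⟩ :=
    exists_norm_eq_one_inner_eq_zero (by rwa [finrank_euclideanSpace_fin]) v u'
  have hbdd := (hK.1.image g.continuous_of_finiteDimensional).isBounded
  have hint : (interior (g '' K)).Nonempty := by
    rw [← g.coe_toHomeomorphOfFiniteDimensional, ← Homeomorph.image_interior]
    exact hK.2.2.image _
  refine IsEllipsoid.of_image g <| hrev'.isEllipsoid_of_meridian hv hbdd hint he hev
    (E.symm.toAffineMap.comp (π.toAffineMap.comp g.symm.toAffineMap)) fun t s => ?_
  set w := t • v + s • e
  have hwu : ⟪w, u'⟫ = 0 := by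
    simp [w, inner_add_left, real_inner_smul_left, heu, real_inner_comm v u' ▸ hu'v]
  calc w ∈ g '' K ↔ ∃ c : ℝ, w + c • u' ∈ g '' K :=
        ⟨fun hw => ⟨0, by simpa using hw⟩, fun ⟨c, hc⟩ => hrev'.mem_of_add_smul_mem hv hu'v hwu hc⟩
    _ ↔ ∃ c : ℝ, g.symm w + c • u ∈ K := exists_congr fun c => by
        rw [← g.preimage_symm, Set.mem_preimage, add_comm, ← vadd_eq_add, g.symm.map_vadd]
        simp [u', add_comm]
    _ ↔ π (g.symm w) ∈ π '' K := orthogonalProjectionOnto_mem_image_iff.symm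
    _ ↔ ‖E.symm (π (g.symm w))‖ ≤ 1 := by
        rw [hE, ← E.preimage_symm, Set.mem_preimage, mem_closedBall_zero_iff]

/-- If K ⊂ ℝ^n is an affine body of revolution with hyperplane of
revolution H, and the orthogonal projection of K along a line ℓ = ℝ∙u parallel to H
is an ellipsoid, then K is an ellipsoid. -/
theorem stmt_9 (n : ℕ) (hn : 3 ≤ n)
    (K : Set (EuclideanSpace ℝ (Fin n))) (hK : IsConvexBody K)
    (H : Set (EuclideanSpace ℝ (Fin n)))
    (hrev : ∃ L : Set (EuclideanSpace ℝ (Fin n)), IsAffineBORAxisHyp K L H)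
    (u : EuclideanSpace ℝ (Fin n)) (hu : u ≠ 0)
    (hpar : ∀ y ∈ H, y + u ∈ H)
    (hell : IsEllipsoid ((Submodule.orthogonalProjectionOnto ((ℝ ∙ u)ᗮ)) '' K)) :
    IsEllipsoid K :=
  stmt_9_general n hn K hK H hrev u hpar hell
end

section
/- Let K ⊂ ℝ^n be a symmetric convex body and suppose that the closed unit Euclidean ball is the unique ellipsoid of minimal volume containing K (that is, the closed unit ball contains K, and every ellipsoid containing K has volume at least that of the unit ball, with equality only for the unit ball itself). Then every linear isomorphism g : ℝ^n → ℝ^n with g(K) = K maps the closed unit ball onto itself; in particular, g is an orthogonal transformation. -/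
open scoped RealInnerProductSpace

/-!
Linear images of the unit ball `B` are ellipsoids, and `vol (f '' B) = |det f| * vol B`.
If `f` preserves `K ⊆ B`, then `f '' B` is an ellipsoid containing `K`, so minimality gives
`|det f| ≥ 1`; applied to `g` and `g⁻¹` this forces `|det g| = 1`. Then `g '' B` is an ellipsoid
containing `K` of minimal volume, so it is `B` by uniqueness, and a linear map preserving the
unit ball preserves the norm.
-/

open Metric MeasureTheory

lemma LinearEquiv.symm_image_eq_of_image_eq {R M : Type*} [Semiring R] [AddCommMonoid M]
    [Module R M] (e : M ≃ₗ[R] M) {s : Set M} (h : e '' s = s) : e.symm '' s = s := by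
  conv_lhs => rw [← h]
  simp only [Set.image_image, LinearEquiv.symm_apply_apply, Set.image_id']

section NormedSpace

variable {E : Type*} [NormedAddCommGroup E] [NormedSpace ℝ E]

lemma LinearMap.norm_map_le_of_mapsTo_closedBall {F : Type*} [NormedAddCommGroup F]
    [NormedSpace ℝ F] (f : E →ₗ[ℝ] F) (hf : Set.MapsTo f (closedBall 0 1) (closedBall 0 1))
    (x : E) : ‖f x‖ ≤ ‖x‖ := by
  rcases eq_or_ne x 0 with rfl | hx
  · simp
  have hx_pos : 0 < ‖x‖ := norm_pos_iff.mpr hx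
  have hunit : ‖x‖⁻¹ • x ∈ closedBall (0 : E) 1 := by
    rw [mem_closedBall_zero_iff, norm_smul, norm_inv, norm_norm, inv_mul_cancel₀ hx_pos.ne']
  have := mem_closedBall_zero_iff.mp (hf hunit)
  rwa [map_smul, norm_smul, norm_inv, norm_norm, inv_mul_le_iff₀ hx_pos, mul_one] at this

lemma LinearEquiv.norm_map_of_image_closedBall_eq (g : E ≃ₗ[ℝ] E)
    (hg : g '' closedBall 0 1 = closedBall 0 1) (x : E) : ‖g x‖ = ‖x‖ := by
  have hle : ∀ f : E ≃ₗ[ℝ] E, f '' closedBall 0 1 = closedBall 0 1 → ∀ y, ‖f y‖ ≤ ‖y‖ :=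
    fun f hf => (f : E →ₗ[ℝ] E).norm_map_le_of_mapsTo_closedBall
      (Set.mapsTo_iff_image_subset.mpr hf.le)
  refine le_antisymm (hle g hg x) ?_
  simpa using hle g.symm (g.symm_image_eq_of_image_eq hg) (g x)

end NormedSpace

lemma LinearEquiv.isEllipsoid_image_closedBall {W : Type*} [NormedAddCommGroup W]
    [InnerProductSpace ℝ W] (f : W ≃ₗ[ℝ] W) : IsEllipsoid (f '' closedBall 0 1) :=
  ⟨f.toAffineEquiv, by rw [LinearEquiv.coe_toAffineEquiv]⟩

section MinimalEllipsoid

variable {W : Type*} [NormedAddCommGroup W] [InnerProductSpace ℝ W] [FiniteDimensional ℝ W]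
  [MeasurableSpace W] [BorelSpace W] (μ : Measure W) [μ.IsAddHaarMeasure]

lemma measure_image_closedBall_linearEquiv (f : W ≃ₗ[ℝ] W) :
    μ (f '' closedBall 0 1) =
      ENNReal.ofReal |LinearMap.det (f : W →ₗ[ℝ] W)| * μ (closedBall 0 1) :=
  Measure.addHaar_image_linearMap μ _ _

variable {K : Set W}

lemma one_le_abs_det_of_image_eq (hsub : K ⊆ closedBall 0 1)
    (hmin : ∀ D, IsEllipsoid D → K ⊆ D → μ (closedBall 0 1) ≤ μ D)
    {f : W ≃ₗ[ℝ] W} (hf : f '' K = K) : 1 ≤ |LinearMap.det (f : W →ₗ[ℝ] W)| := by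
  have hle := hmin _ f.isEllipsoid_image_closedBall (hf ▸ Set.image_mono hsub)
  rw [measure_image_closedBall_linearEquiv] at hle
  refine ENNReal.one_le_ofReal.mp <| (ENNReal.mul_le_mul_iff_left
    (measure_closedBall_pos μ 0 one_pos).ne' measure_closedBall_lt_top.ne).mp ?_
  rwa [one_mul]

lemma abs_det_eq_one_of_image_eq (hsub : K ⊆ closedBall 0 1)
    (hmin : ∀ D, IsEllipsoid D → K ⊆ D → μ (closedBall 0 1) ≤ μ D)
    {g : W ≃ₗ[ℝ] W} (hg : g '' K = K) : |LinearMap.det (g : W →ₗ[ℝ] W)| = 1 := by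
  have hle := one_le_abs_det_of_image_eq μ hsub hmin hg
  have hle_symm := one_le_abs_det_of_image_eq μ hsub hmin (g.symm_image_eq_of_image_eq hg)
  rw [LinearEquiv.det_coe_symm, abs_inv, one_le_inv₀ (one_pos.trans_le hle)] at hle_symm
  exact le_antisymm hle_symm hle

lemma image_closedBall_eq_of_image_eq (hsub : K ⊆ closedBall 0 1)
    (hmin : ∀ D, IsEllipsoid D → K ⊆ D → μ (closedBall 0 1) ≤ μ D)
    (huniq : ∀ D, IsEllipsoid D → K ⊆ D → μ D = μ (closedBall 0 1) → D = closedBall 0 1)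
    {g : W ≃ₗ[ℝ] W} (hg : g '' K = K) : g '' closedBall 0 1 = closedBall 0 1 := by
  refine huniq _ g.isEllipsoid_image_closedBall (hg ▸ Set.image_mono hsub) ?_
  rw [measure_image_closedBall_linearEquiv, abs_det_eq_one_of_image_eq μ hsub hmin hg,
    ENNReal.ofReal_one, one_mul]

end MinimalEllipsoid

theorem stmt_14_general (n : ℕ)
    (K : Set (EuclideanSpace ℝ (Fin n)))
    (hsub : K ⊆ Metric.closedBall 0 1)
    (hmin : ∀ D : Set (EuclideanSpace ℝ (Fin n)), IsEllipsoid D → K ⊆ D →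
      MeasureTheory.volume (Metric.closedBall (0 : EuclideanSpace ℝ (Fin n)) 1) ≤
        MeasureTheory.volume D)
    (huniq : ∀ D : Set (EuclideanSpace ℝ (Fin n)), IsEllipsoid D → K ⊆ D →
      MeasureTheory.volume D =
        MeasureTheory.volume (Metric.closedBall (0 : EuclideanSpace ℝ (Fin n)) 1) →
      D = Metric.closedBall 0 1)
    (g : EuclideanSpace ℝ (Fin n) ≃ₗ[ℝ] EuclideanSpace ℝ (Fin n)) (hg : g '' K = K) :
    g '' Metric.closedBall 0 1 = Metric.closedBall 0 1 ∧ ∀ x, ‖g x‖ = ‖x‖ := by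
  have hball := image_closedBall_eq_of_image_eq volume hsub hmin huniq hg
  exact ⟨hball, g.norm_map_of_image_closedBall_eq hball⟩

/-- If the closed unit ball is the unique minimal-volume ellipsoid
containing a symmetric convex body K ⊂ ℝ^n, then every linear isomorphism fixing K
maps the closed unit ball onto itself; in particular it is an orthogonal
transformation. -/
theorem stmt_14 (n : ℕ)
    (K : Set (EuclideanSpace ℝ (Fin n))) (hK : IsConvexBody K)
    (hKsymm : ∀ x ∈ K, -x ∈ K)
    (hsub : K ⊆ Metric.closedBall 0 1)
    (hmin : ∀ D : Set (EuclideanSpace ℝ (Fin n)), IsEllipsoid D → K ⊆ D →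
      MeasureTheory.volume (Metric.closedBall (0 : EuclideanSpace ℝ (Fin n)) 1) ≤
        MeasureTheory.volume D)
    (huniq : ∀ D : Set (EuclideanSpace ℝ (Fin n)), IsEllipsoid D → K ⊆ D →
      MeasureTheory.volume D =
        MeasureTheory.volume (Metric.closedBall (0 : EuclideanSpace ℝ (Fin n)) 1) →
      D = Metric.closedBall 0 1)
    (g : EuclideanSpace ℝ (Fin n) ≃ₗ[ℝ] EuclideanSpace ℝ (Fin n)) (hg : g '' K = K) :
    g '' Metric.closedBall 0 1 = Metric.closedBall 0 1 ∧ ∀ x, ‖g x‖ = ‖x‖ :=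
  stmt_14_general n K hsub hmin huniq g hg
end

section
/- Let n ≥ 3 and let K ⊂ ℝ^n be an affine body of revolution with axis of revolution L and associated hyperplane of revolution H. Let ℓ be a 1-dimensional linear subspace parallel to H, and let π : ℝ^n → ℓ⊥ be the orthogonal projection along ℓ. Then there exists a hyperplane Γ of ℝ^n containing L such that π(Γ ∩ K) = π(K); that is, the shadow boundary of K in the direction ℓ lies in a hyperplane through the axis L. -/
open scoped RealInnerProductSpace

/-!
In the affine image where `K` is a genuine body of revolution about `ℝ ∙ v`, the direction
`u` becomes a vector `u'` orthogonal to `v`. Sliding a point of `K` along `u'` to the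
hyperplane `⟪y, u'⟫ = 0` keeps it in its slice orthogonal to the axis and, by Pythagoras,
brings it closer to the slice's centre on the axis, so it stays in `K`. Thus every line
parallel to `u` that meets `K` meets `K` inside the pull-back of that hyperplane, which
contains `L`.
-/

variable {W : Type*} [NormedAddCommGroup W] [InnerProductSpace ℝ W]

theorem norm_le_norm_add_of_inner_eq_zero {a b : W} (h : ⟪a, b⟫ = 0) : ‖a‖ ≤ ‖a + b‖ := by
  have := norm_add_sq_eq_norm_sq_add_norm_sq_real h
  nlinarith [norm_nonneg a, norm_nonneg (a + b), mul_self_nonneg ‖b‖]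

namespace IsBodyOfRevolutionAxis

variable {K : Set W} {p v : W}

theorem mem_of_dist_le (hK : IsBodyOfRevolutionAxis K p v) {x y : W} (hx : x ∈ K)
    (hyv : ⟪y, v⟫ = ⟪x, v⟫)
    (hdist : dist y (p + ((⟪x, v⟫ - ⟪p, v⟫) / ⟪v, v⟫) • v) ≤
      dist x (p + ((⟪x, v⟫ - ⟪p, v⟫) / ⟪v, v⟫) • v)) :
    y ∈ K := by
  have hx' : x ∈ K ∩ {z | ⟪z, v⟫ = ⟪x, v⟫} := ⟨hx, rfl⟩
  rcases hK.2 ⟪x, v⟫ with hempty | ⟨r, -, hball⟩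
  · simp [hempty] at hx'
  · rw [hball] at hx'
    have hy : y ∈ K ∩ {z | ⟪z, v⟫ = ⟪x, v⟫} := by
      rw [hball]
      exact ⟨hyv, hdist.trans hx'.2⟩
    exact hy.1

theorem exists_add_smul_mem_inner_eq (hK : IsBodyOfRevolutionAxis K p v) {u : W}
    (huv : ⟪u, v⟫ = 0) {x : W} (hx : x ∈ K) :
    ∃ t : ℝ, x + t • u ∈ K ∧ ⟪x + t • u, u⟫ = ⟪p, u⟫ := by
  rcases eq_or_ne u 0 with rfl | hu
  · exact ⟨0, by simpa using hx, by simp⟩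
  have huu : ⟪u, u⟫ ≠ 0 := inner_self_ne_zero.2 hu
  set t := ⟪p - x, u⟫ / ⟪u, u⟫
  have hyu : ⟪x + t • u, u⟫ = ⟪p, u⟫ := by
    rw [inner_add_left, real_inner_smul_left, div_mul_cancel₀ _ huu, inner_sub_left]
    ring
  refine ⟨t, hK.mem_of_dist_le hx ?_ ?_, hyu⟩
  · simp [inner_add_left, real_inner_smul_left, huv]
  · set q := p + ((⟪x, v⟫ - ⟪p, v⟫) / ⟪v, v⟫) • v
    have hperp : ⟪x + t • u - q, u⟫ = 0 := by
      rw [inner_sub_left, hyu]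
      simp [q, inner_add_left, real_inner_smul_left, real_inner_comm u v, huv]
    rw [dist_eq_norm, dist_eq_norm]
    calc ‖x + t • u - q‖ ≤ ‖x + t • u - q + -t • u‖ :=
          norm_le_norm_add_of_inner_eq_zero (by rw [real_inner_smul_right, hperp, mul_zero])
      _ = ‖x - q‖ := by congr 1; module

end IsBodyOfRevolutionAxis

theorem image_orthogonalProjectionOnto_inter_eq {K Γ : Set W} {u : W}
    [(ℝ ∙ u)ᗮ.HasOrthogonalProjection] (h : ∀ x ∈ K, ∃ t : ℝ, x + t • u ∈ Γ ∩ K) :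
    (ℝ ∙ u)ᗮ.orthogonalProjectionOnto '' (Γ ∩ K) = (ℝ ∙ u)ᗮ.orthogonalProjectionOnto '' K := by
  refine (Set.image_mono Set.inter_subset_right).antisymm ?_
  rintro - ⟨x, hx, rfl⟩
  obtain ⟨t, hmem⟩ := h x hx
  refine ⟨x + t • u, hmem, ?_⟩
  have hu : (ℝ ∙ u)ᗮ.orthogonalProjectionOnto u = 0 :=
    Submodule.orthogonalProjectionOnto_orthogonal_apply_eq_zero
      (Submodule.mem_span_singleton_self u)
  simp [hu]

theorem LinearEquiv.adjoint_apply_ne_zero [FiniteDimensional ℝ W] (e : W ≃ₗ[ℝ] W) {w : W}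
    (hw : w ≠ 0) : LinearMap.adjoint (e : W →ₗ[ℝ] W) w ≠ 0 := by
  intro h
  have := LinearMap.adjoint_inner_right (e : W →ₗ[ℝ] W) (e.symm w) w
  simp only [h, inner_zero_right, LinearEquiv.coe_coe, LinearEquiv.apply_symm_apply] at this
  exact hw (inner_self_eq_zero.1 this.symm)

namespace AffineEquiv

theorem inner_linear_eq_zero_of_image_eq {H : Set W} {u v : W} (g : W ≃ᵃ[ℝ] W)
    (hH : g '' H = {y | ⟪y, v⟫ = 0}) (hpar : ∀ y ∈ H, y + u ∈ H) :
    ⟪g.linear u, v⟫ = 0 := by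
  have hmem : ∀ y ∈ H, ⟪g y, v⟫ = 0 := fun y hy => by
    have := Set.mem_image_of_mem g hy
    rwa [hH] at this
  obtain ⟨y, hy, hy0⟩ : (0 : W) ∈ g '' H := by simp [hH]
  have := hmem _ (hpar y hy)
  rwa [add_comm, ← vadd_eq_add, g.map_vadd, hy0, vadd_eq_add, add_zero] at this

theorem preimage_setOf_inner_eq [FiniteDimensional ℝ W] (g : W ≃ᵃ[ℝ] W) (w : W) (c : ℝ) :
    g ⁻¹' {y | ⟪y, w⟫ = c} =
      {y | ⟪y, LinearMap.adjoint (g.linear : W →ₗ[ℝ] W) w⟫ = c - ⟪g 0, w⟫} := by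
  ext y
  have hg : g y = g.linear y + g 0 := by simpa using g.map_vadd 0 y
  simp only [Set.mem_preimage, Set.mem_ofPred_eq, LinearMap.adjoint_inner_right,
    LinearEquiv.coe_coe, hg, inner_add_left]
  constructor <;> intro h <;> linarith

end AffineEquiv

theorem stmt_15_general (n : ℕ)
    (K : Set (EuclideanSpace ℝ (Fin n)))
    (L H : Set (EuclideanSpace ℝ (Fin n))) (hrev : IsAffineBORAxisHyp K L H)
    (u : EuclideanSpace ℝ (Fin n)) (hu : u ≠ 0)
    (hpar : ∀ y ∈ H, y + u ∈ H) :
    ∃ (w : EuclideanSpace ℝ (Fin n)) (c : ℝ), w ≠ 0 ∧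
      L ⊆ {y | ⟪y, w⟫ = c} ∧
      (Submodule.orthogonalProjectionOnto ((ℝ ∙ u)ᗮ)) '' ({y | ⟪y, w⟫ = c} ∩ K) =
        (Submodule.orthogonalProjectionOnto ((ℝ ∙ u)ᗮ)) '' K := by
  obtain ⟨g, v, hbody, hL, hH⟩ := hrev
  have huv := g.inner_linear_eq_zero_of_image_eq hH hpar
  have hu' : g.linear u ≠ 0 := (map_ne_zero_iff _ g.linear.injective).2 hu
  refine ⟨_, 0 - ⟪g 0, g.linear u⟫, g.linear.adjoint_apply_ne_zero hu', ?_, ?_⟩ <;>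
    rw [← g.preimage_setOf_inner_eq (g.linear u) 0]
  · rw [← Set.image_subset_iff, hL]
    rintro - ⟨t, rfl⟩
    simp [inner_smul_left, (real_inner_comm (g.linear u) v).trans huv]
  · refine image_orthogonalProjectionOnto_inter_eq fun x hx => ?_
    obtain ⟨t, hK, hΓ⟩ := hbody.exists_add_smul_mem_inner_eq huv (Set.mem_image_of_mem g hx)
    have hg : g (x + t • u) = g x + t • g.linear u := by
      rw [add_comm x, ← vadd_eq_add, g.map_vadd, vadd_eq_add, map_smul, add_comm]
    refine ⟨t, ?_, ?_⟩
    · simpa [hg] using hΓ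
    · rwa [← g.injective.mem_set_image, hg]

/-- If K ⊂ ℝ^n is an affine body of revolution with axis of
revolution L and hyperplane of revolution H, and ℓ = ℝ∙u is parallel to H, then
there is a hyperplane Γ = {y | ⟪y,w⟫ = c} containing L such that the orthogonal
projection along ℓ of Γ ∩ K equals the projection of K (the shadow boundary of K in
the direction ℓ lies in a hyperplane through the axis L). -/
theorem stmt_15 (n : ℕ) (hn : 3 ≤ n)
    (K : Set (EuclideanSpace ℝ (Fin n))) (hK : IsConvexBody K)
    (L H : Set (EuclideanSpace ℝ (Fin n))) (hrev : IsAffineBORAxisHyp K L H)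
    (u : EuclideanSpace ℝ (Fin n)) (hu : u ≠ 0)
    (hpar : ∀ y ∈ H, y + u ∈ H) :
    ∃ (w : EuclideanSpace ℝ (Fin n)) (c : ℝ), w ≠ 0 ∧
      L ⊆ {y | ⟪y, w⟫ = c} ∧
      (Submodule.orthogonalProjectionOnto ((ℝ ∙ u)ᗮ)) '' ({y | ⟪y, w⟫ = c} ∩ K) =
        (Submodule.orthogonalProjectionOnto ((ℝ ∙ u)ᗮ)) '' K :=
  stmt_15_general n K L H hrev u hu hpar
end
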